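/- Let (χ₁,…,χ_r) and (ψ₁,…,ψ_s) be two reduced sequences of linear order types. If the lexicographic sums χ₁ + ⋯ + χ_r and ψ₁ + ⋯ + ψ_s are order-isomorphic, then r = s and for every i, χ_i = ψ_i (the same symbol ω or ω*, or finite orders of the same cardinality). -/
import Mathlib


/-- The allowed summand order types: ω, ω*, and finite orders. -/
inductive OT : Type
  | omega : OT
  | omegaStar : OT
  | fin : ℕ → OT
deriving DecidableEq

/-- The canonical linearly ordered carrier of each order type symbol. -/
def OT.carrier : OT → Type
  | .omega => ℕ
  | .omegaStar => ℕᵒᵈ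
  | .fin n => Fin n

instance OT.instLinearOrder : (χ : OT) → LinearOrder χ.carrier
  | .omega => inferInstanceAs (LinearOrder ℕ)
  | .omegaStar => inferInstanceAs (LinearOrder ℕᵒᵈ)
  | .fin n => inferInstanceAs (LinearOrder (Fin n))

/-- `χ` is a finite order type symbol. -/
def OT.IsFinite : OT → Prop
  | .fin _ => True
  | _ => False

/-- A sequence of order type symbols is reduced if every finite symbol is nonempty,
no two consecutive symbols are finite, no finite symbol is immediately followed by ω,
and no ω* is immediately followed by a finite symbol. -/
def IsReducedSeq {r : ℕ} (χ : Fin r → OT) : Prop :=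
  (∀ i n, χ i = .fin n → 1 ≤ n) ∧
  ∀ (i : ℕ) (h : i + 1 < r),
    ¬((χ ⟨i, Nat.lt_of_succ_lt h⟩).IsFinite ∧ (χ ⟨i + 1, h⟩).IsFinite) ∧
    ¬((χ ⟨i, Nat.lt_of_succ_lt h⟩).IsFinite ∧ χ ⟨i + 1, h⟩ = .omega) ∧
    ¬(χ ⟨i, Nat.lt_of_succ_lt h⟩ = .omegaStar ∧ (χ ⟨i + 1, h⟩).IsFinite)

instance OT.instLocallyFiniteOrder : (χ : OT) → LocallyFiniteOrder χ.carrier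
  | .omega => inferInstanceAs (LocallyFiniteOrder ℕ)
  | .omegaStar => inferInstanceAs (LocallyFiniteOrder ℕᵒᵈ)
  | .fin n => inferInstanceAs (LocallyFiniteOrder (Fin n))

namespace OT

lemma nonempty_carrier {χ : OT} (h : ∀ n, χ = .fin n → 1 ≤ n) : Nonempty χ.carrier := by
  cases χ with
  | omega => exact ⟨(0 : ℕ)⟩
  | omegaStar => exact ⟨(OrderDual.toDual 0 : ℕᵒᵈ)⟩
  | fin n => exact ⟨(⟨0, h n rfl⟩ : Fin n)⟩

lemma finite_Icc' (χ : OT) (a b : χ.carrier) : (Set.Icc a b).Finite := Set.finite_Icc a b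

lemma finite_Ici_of_omegaStar {χ : OT} (h : χ = .omegaStar) (b : χ.carrier) :
    (Set.Ici b).Finite := by subst h; exact Set.finite_Ici (α := ℕᵒᵈ) b

lemma finite_Iic_of_omega {χ : OT} (h : χ = .omega) (b : χ.carrier) :
    (Set.Iic b).Finite := by subst h; exact Set.finite_Iic (α := ℕ) b

lemma infinite_Ici_of_omega {χ : OT} (h : χ = .omega) (b : χ.carrier) :
    (Set.Ici b).Infinite := by subst h; exact Set.Ici_infinite (α := ℕ) b

lemma infinite_Iic_of_omegaStar {χ : OT} (h : χ = .omegaStar) (b : χ.carrier) :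
    (Set.Iic b).Infinite := by subst h; exact Set.Iic_infinite (α := ℕᵒᵈ) b

lemma infinite_univ_of_omega {χ : OT} (h : χ = .omega) :
    (Set.univ : Set χ.carrier).Infinite := by
  subst h; exact Set.infinite_univ (α := ℕ)

lemma infinite_univ_of_omegaStar {χ : OT} (h : χ = .omegaStar) :
    (Set.univ : Set χ.carrier).Infinite := by
  subst h; exact Set.infinite_univ (α := ℕᵒᵈ)

lemma exists_lt_of_omegaStar {χ : OT} (h : χ = .omegaStar) (a : χ.carrier) :
    ∃ b, b < a := by subst h; exact exists_lt (α := ℕᵒᵈ) a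

lemma exists_gt_of_omega {χ : OT} (h : χ = .omega) (a : χ.carrier) :
    ∃ b, a < b := by subst h; exact exists_gt (α := ℕ) a

lemma exists_top_of_omegaStar {χ : OT} (h : χ = .omegaStar) :
    ∃ t : χ.carrier, ∀ a, a ≤ t := by
  subst h; exact ⟨(OrderDual.toDual 0 : ℕᵒᵈ), fun a => Nat.zero_le _⟩

lemma exists_bot_of_omega {χ : OT} (h : χ = .omega) :
    ∃ b : χ.carrier, ∀ a, b ≤ a := by
  subst h; exact ⟨(0 : ℕ), fun a => Nat.zero_le a⟩

lemma card_of_fin {χ : OT} {n : ℕ} (h : χ = .fin n) : Nat.card χ.carrier = n := by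
  subst h; simp [carrier]

end OT

/-- The "first condensation class": elements all of whose lower intervals are finite. -/
def FC (α : Type*) [LinearOrder α] : Set α := {x | ∀ y ≤ x, (Set.Icc y x).Finite}

def HasMin {α : Type*} [LinearOrder α] (S : Set α) : Prop := ∃ m ∈ S, ∀ x ∈ S, m ≤ x
def HasMax {α : Type*} [LinearOrder α] (S : Set α) : Prop := ∃ m ∈ S, ∀ x ∈ S, x ≤ m

section Transfer

variable {α β : Type*} [LinearOrder α] [LinearOrder β] (f : α ≃o β)

lemma fc_map (x : α) : x ∈ FC α ↔ f x ∈ FC β := by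
  constructor
  · intro hx z hz
    have hz' : f.symm z ≤ x := by
      have := f.symm.monotone hz
      simpa using this
    have : Set.Icc z (f x) = f.symm ⁻¹' Set.Icc (f.symm z) x := by
      ext w
      simp only [Set.mem_preimage, Set.mem_Icc, f.symm.le_iff_le, f.symm_apply_le]
    rw [this]
    exact (hx _ hz').preimage f.symm.injective.injOn
  · intro hx y hy
    have hy' : f y ≤ f x := f.monotone hy
    have : Set.Icc y x = f ⁻¹' Set.Icc (f y) (f x) := by
      ext w
      simp only [Set.mem_preimage, Set.mem_Icc, f.le_iff_le]
    rw [this]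
    exact (hx _ hy').preimage f.injective.injOn

variable {S : Set α} {T : Set β} (hST : ∀ x, x ∈ S ↔ f x ∈ T)
include hST

lemma transfer_eq_image : T = f '' S := by
  ext y
  constructor
  · intro hy
    exact ⟨f.symm y, (hST _).2 (by simpa using hy), by simp⟩
  · rintro ⟨x, hx, rfl⟩
    exact (hST x).1 hx

lemma transfer_finite (h : S.Finite) : T.Finite := by
  rw [transfer_eq_image f hST]; exact h.image f

lemma transfer_card : Nat.card S = Nat.card T := by
  rw [transfer_eq_image f hST]
  exact Nat.card_congr (Equiv.Set.image f S f.injective)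

lemma transfer_hasMin (h : HasMin S) : HasMin T := by
  obtain ⟨m, hm, hmin⟩ := h
  refine ⟨f m, (hST m).1 hm, fun y hy => ?_⟩
  have : f.symm y ∈ S := (hST _).2 (by simpa using hy)
  have := hmin _ this
  calc f m ≤ f (f.symm y) := f.monotone this
    _ = y := by simp

lemma transfer_hasMax (h : HasMax S) : HasMax T := by
  obtain ⟨m, hm, hmax⟩ := h
  refine ⟨f m, (hST m).1 hm, fun y hy => ?_⟩
  have : f.symm y ∈ S := (hST _).2 (by simpa using hy)
  calc y = f (f.symm y) := by simp
    _ ≤ f m := f.monotone (hmax _ this)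

end Transfer

section Lex

variable {r : ℕ} {χ : Fin r → OT}

@[simp] lemma toLex_fst (i : Fin r) (a : (χ i).carrier) :
    (toLex (⟨i, a⟩ : Σ i, (χ i).carrier)).1 = i := rfl

lemma toLex_le_left {i j : Fin r} (h : i < j) (a : (χ i).carrier) (b : (χ j).carrier) :
    toLex (⟨i, a⟩ : Σ i, (χ i).carrier) ≤ toLex ⟨j, b⟩ := Sigma.Lex.le_def.2 (Or.inl h)

lemma toLex_le_same {i : Fin r} {a b : (χ i).carrier} (h : a ≤ b) :
    toLex (⟨i, a⟩ : Σ i, (χ i).carrier) ≤ toLex ⟨i, b⟩ := Sigma.Lex.le_def.2 (Or.inr ⟨rfl, h⟩)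

lemma toLex_lt_left {i j : Fin r} (h : i < j) (a : (χ i).carrier) (b : (χ j).carrier) :
    toLex (⟨i, a⟩ : Σ i, (χ i).carrier) < toLex ⟨j, b⟩ := Sigma.Lex.lt_def.2 (Or.inl h)

lemma toLex_lt_same {i : Fin r} {a b : (χ i).carrier} (h : a < b) :
    toLex (⟨i, a⟩ : Σ i, (χ i).carrier) < toLex ⟨i, b⟩ := Sigma.Lex.lt_def.2 (Or.inr ⟨rfl, h⟩)

/-- destructing a `≤` with same left index -/
lemma le_of_toLex_le_same {i : Fin r} {a b : (χ i).carrier}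
    (h : toLex (⟨i, a⟩ : Σ i, (χ i).carrier) ≤ toLex ⟨i, b⟩) : a ≤ b := by
  rcases Sigma.Lex.le_def.1 h with h1 | ⟨h2, h3⟩
  · exact absurd h1 (lt_irrefl i)
  · exact h3

lemma icc_finite {y x : Σₗ i, (χ i).carrier}
    (h : ∀ k : Fin r, {c : (χ k).carrier | toLex ⟨k, c⟩ ∈ Set.Icc y x}.Finite) :
    (Set.Icc y x).Finite := by
  have hsub : Set.Icc y x ⊆ ⋃ k : Fin r, (fun c => toLex ⟨k, c⟩) ''
      {c : (χ k).carrier | toLex ⟨k, c⟩ ∈ Set.Icc y x} := by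
    intro z hz
    refine Set.mem_iUnion.2 ⟨z.1, ⟨z.2, ?_, rfl⟩⟩
    exact hz
  exact Set.Finite.subset (Set.finite_iUnion fun k => (h k).image _) hsub

lemma icc_infinite {y x : Σₗ i, (χ i).carrier} (k : Fin r)
    {S : Set (χ k).carrier} (hS : S.Infinite)
    (h : ∀ c ∈ S, toLex ⟨k, c⟩ ∈ Set.Icc y x) :
    (Set.Icc y x).Infinite := by
  have hinj : Function.Injective (fun c : (χ k).carrier => toLex (⟨k, c⟩ : Σ i, (χ i).carrier)) := by
    intro a b hab
    have := sigma_mk_injective (toLex.injective hab)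
    exact this
  refine Set.Infinite.mono ?_ (hS.image hinj.injOn)
  rintro z ⟨c, hc, rfl⟩
  exact h c hc

end Lex

section Sum

variable {r : ℕ} {χ : Fin r → OT}

lemma fst_le_of_le {x y : Σₗ i, (χ i).carrier} (h : y ≤ x) : y.1.val ≤ x.1.val := by
  rcases Sigma.Lex.le_def.1 h with h1 | ⟨h2, -⟩
  · exact le_of_lt (Fin.lt_def.1 h1)
  · exact le_of_eq (congrArg Fin.val h2)

lemma mem0_FC (h0 : 0 < r) (a : (χ ⟨0, h0⟩).carrier) :
    toLex ⟨⟨0, h0⟩, a⟩ ∈ FC (Σₗ i, (χ i).carrier) := by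
  intro y hy
  obtain ⟨j, b⟩ := y
  have hle : j.val ≤ 0 := fst_le_of_le hy
  have hj : j = ⟨0, h0⟩ := Fin.ext (Nat.le_zero.1 hle)
  subst hj
  apply icc_finite
  intro k
  by_cases hk : k = ⟨0, h0⟩
  · subst hk
    refine Set.Finite.subset (Set.finite_Icc b a) ?_
    rintro c ⟨hc1, hc2⟩
    exact ⟨le_of_toLex_le_same hc1, le_of_toLex_le_same hc2⟩
  · refine Set.Finite.subset Set.finite_empty ?_
    rintro c ⟨hc1, hc2⟩
    have hle2 : k.val ≤ 0 := fst_le_of_le hc2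
    exact hk (Fin.ext (Nat.le_zero.1 hle2))

lemma notmem_FC_of_omega {j i : Fin r} (hji : j < i) (hj : χ j = .omega)
    (a : (χ i).carrier) : toLex ⟨i, a⟩ ∉ FC (Σₗ i, (χ i).carrier) := by
  obtain ⟨b⟩ : Nonempty (χ j).carrier :=
    OT.nonempty_carrier (fun n h => absurd (hj.symm.trans h) (by simp))
  intro hmem
  have hy : toLex (⟨j, b⟩ : Σ i, (χ i).carrier) ≤ toLex ⟨i, a⟩ := toLex_le_left hji b a
  refine icc_infinite j (OT.infinite_Ici_of_omega hj b) ?_ (hmem _ hy)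
  intro c hc
  exact ⟨toLex_le_same hc, toLex_le_left hji c a⟩

lemma notmem_FC_of_omegaStar {k i : Fin r} (h0 : 0 < r) (hk0 : 0 < k.val) (hki : k ≤ i)
    (hst : χ k = .omegaStar) (b0 : (χ ⟨0, h0⟩).carrier)
    (a : (χ i).carrier) : toLex ⟨i, a⟩ ∉ FC (Σₗ i, (χ i).carrier) := by
  intro hmem
  have h0i : (⟨0, h0⟩ : Fin r) < i := Fin.lt_def.2 (lt_of_lt_of_le hk0 (Fin.le_def.1 hki))
  have h0k : (⟨0, h0⟩ : Fin r) < k := Fin.lt_def.2 hk0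
  have hy : toLex (⟨⟨0, h0⟩, b0⟩ : Σ i, (χ i).carrier) ≤ toLex ⟨i, a⟩ := toLex_le_left h0i _ _
  rcases eq_or_lt_of_le hki with heq | hlt
  · subst heq
    refine icc_infinite k (OT.infinite_Iic_of_omegaStar hst a) ?_ (hmem _ hy)
    intro c hc
    exact ⟨toLex_le_left h0k _ _, toLex_le_same hc⟩
  · refine icc_infinite k (OT.infinite_univ_of_omegaStar hst) ?_ (hmem _ hy)
    intro c _
    exact ⟨toLex_le_left h0k _ _, toLex_le_left hlt _ _⟩

lemma memZ_FC (h1 : 1 < r) (hst : χ ⟨0, Nat.lt_of_succ_lt h1⟩ = .omegaStar)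
    (hom : χ ⟨1, h1⟩ = .omega) (a : (χ ⟨1, h1⟩).carrier) :
    toLex ⟨⟨1, h1⟩, a⟩ ∈ FC (Σₗ i, (χ i).carrier) := by
  have h0 : 0 < r := Nat.lt_of_succ_lt h1
  intro y hy
  obtain ⟨j, b⟩ := y
  apply icc_finite
  intro k
  by_cases hk0 : k = ⟨0, h0⟩
  · subst hk0
    by_cases hj : j = ⟨0, h0⟩
    · subst hj
      refine Set.Finite.subset (OT.finite_Ici_of_omegaStar hst b) ?_
      rintro c ⟨hc1, _⟩
      exact le_of_toLex_le_same hc1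
    · refine Set.Finite.subset Set.finite_empty ?_
      rintro c ⟨hc1, _⟩
      have hle : j.val ≤ 0 := fst_le_of_le hc1
      exact hj (Fin.ext (Nat.le_zero.1 hle))
  · by_cases hk1 : k = ⟨1, h1⟩
    · subst hk1
      refine Set.Finite.subset (OT.finite_Iic_of_omega hom a) ?_
      rintro c ⟨_, hc2⟩
      exact le_of_toLex_le_same hc2
    · refine Set.Finite.subset Set.finite_empty ?_
      rintro c ⟨_, hc2⟩
      have hle : k.val ≤ 1 := fst_le_of_le hc2
      have hne0 : k.val ≠ 0 := fun h => hk0 (Fin.ext h)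
      exact hk1 (Fin.ext (show k.val = 1 by omega))

end Sum

section Classify

variable {r : ℕ} {χ : Fin r → OT}

lemma reduced_nonempty (hχ : IsReducedSeq χ) (i : Fin r) : Nonempty (χ i).carrier :=
  OT.nonempty_carrier (hχ.1 i)

lemma next_of_fin (hχ : IsReducedSeq χ) (h1 : 1 < r) {n : ℕ}
    (hf : χ ⟨0, Nat.lt_of_succ_lt h1⟩ = .fin n) : χ ⟨1, h1⟩ = .omegaStar := by
  have hcl := hχ.2 0 h1
  have hfin0 : (χ ⟨0, Nat.lt_of_succ_lt h1⟩).IsFinite := by rw [hf]; exact trivial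
  rcases hv : χ ⟨1, h1⟩ with _ | _ | m
  · exact absurd ⟨hfin0, hv⟩ hcl.2.1
  · rfl
  · exact absurd ⟨hfin0, by rw [hv]; exact trivial⟩ hcl.1

lemma next_of_star (hχ : IsReducedSeq χ) (h1 : 1 < r)
    (hf : χ ⟨0, Nat.lt_of_succ_lt h1⟩ = .omegaStar) :
    χ ⟨1, h1⟩ = .omega ∨ χ ⟨1, h1⟩ = .omegaStar := by
  have hcl := hχ.2 0 h1
  rcases hv : χ ⟨1, h1⟩ with _ | _ | m
  · exact Or.inl rfl
  · exact Or.inr rfl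
  · exact absurd ⟨hf, by rw [hv]; exact trivial⟩ hcl.2.2

lemma mk0_injective (h0 : 0 < r) :
    Function.Injective (fun a : (χ ⟨0, h0⟩).carrier =>
      toLex (⟨⟨0, h0⟩, a⟩ : Σ i, (χ i).carrier)) := by
  intro a b hab
  have hab' : (⟨⟨0, h0⟩, a⟩ : Σ i, (χ i).carrier) = ⟨⟨0, h0⟩, b⟩ := hab
  exact @sigma_mk_injective (Fin r) (fun i => (χ i).carrier) ⟨0, h0⟩ a b hab'

lemma FC_desc_fin (hχ : IsReducedSeq χ) (h0 : 0 < r) {n : ℕ} (hf : χ ⟨0, h0⟩ = .fin n) :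
    FC (Σₗ i, (χ i).carrier) = {x | x.1.val < 1} := by
  ext x
  obtain ⟨i, a⟩ := x
  constructor
  · intro hx
    by_contra hge
    have hge2 : ¬ i.val < 1 := hge
    have h1 : 1 < r := by have := i.isLt; omega
    have hst := next_of_fin hχ h1 hf
    obtain ⟨b0⟩ := reduced_nonempty hχ ⟨0, h0⟩
    exact notmem_FC_of_omegaStar h0 Nat.one_pos
      (Fin.le_def.2 (show (1:ℕ) ≤ i.val by omega)) hst b0 a hx
  · intro hx
    have : i = ⟨0, h0⟩ := Fin.ext (Nat.lt_one_iff.1 hx)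
    subst this
    exact mem0_FC h0 a

lemma FC_desc_omega (h0 : 0 < r) (hf : χ ⟨0, h0⟩ = .omega) :
    FC (Σₗ i, (χ i).carrier) = {x | x.1.val < 1} := by
  ext x
  obtain ⟨i, a⟩ := x
  constructor
  · intro hx
    by_contra hge
    have hge2 : ¬ i.val < 1 := hge
    exact notmem_FC_of_omega (Fin.lt_def.2 (show (0:ℕ) < i.val by omega)) hf a hx
  · intro hx
    have : i = ⟨0, h0⟩ := Fin.ext (Nat.lt_one_iff.1 hx)
    subst this
    exact mem0_FC h0 a

lemma FC_desc_star1 (hχ : IsReducedSeq χ) (h0 : 0 < r) (hst : χ ⟨0, h0⟩ = .omegaStar)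
    (hnext : ∀ h1 : 1 < r, χ ⟨1, h1⟩ = .omegaStar) :
    FC (Σₗ i, (χ i).carrier) = {x | x.1.val < 1} := by
  ext x
  obtain ⟨i, a⟩ := x
  constructor
  · intro hx
    by_contra hge
    have hge2 : ¬ i.val < 1 := hge
    have h1 : 1 < r := by have := i.isLt; omega
    obtain ⟨b0⟩ := reduced_nonempty hχ ⟨0, h0⟩
    exact notmem_FC_of_omegaStar h0 Nat.one_pos
      (Fin.le_def.2 (show (1:ℕ) ≤ i.val by omega)) (hnext h1) b0 a hx
  · intro hx
    have : i = ⟨0, h0⟩ := Fin.ext (Nat.lt_one_iff.1 hx)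
    subst this
    exact mem0_FC h0 a

lemma FC_desc_star2 (h1 : 1 < r) (hst : χ ⟨0, Nat.lt_of_succ_lt h1⟩ = .omegaStar)
    (hom : χ ⟨1, h1⟩ = .omega) :
    FC (Σₗ i, (χ i).carrier) = {x | x.1.val < 2} := by
  have h0 : 0 < r := Nat.lt_of_succ_lt h1
  ext x
  obtain ⟨i, a⟩ := x
  constructor
  · intro hx
    by_contra hge
    have hge2 : ¬ i.val < 2 := hge
    exact notmem_FC_of_omega (Fin.lt_def.2 (show (1:ℕ) < i.val by omega)) hom a hx
  · intro hx
    obtain ⟨iv, hilt⟩ := i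
    have hx' : iv < 2 := hx
    rcases (by omega : iv = 0 ∨ iv = 1) with h | h
    · subst h
      exact mem0_FC h0 a
    · subst h
      exact memZ_FC h1 hst hom a

lemma FC_infinite_of (h0 : 0 < r) (hU : (Set.univ : Set (χ ⟨0, h0⟩).carrier).Infinite) :
    (FC (Σₗ i, (χ i).carrier)).Infinite := by
  refine Set.Infinite.mono ?_ (hU.image (mk0_injective h0).injOn)
  rintro x ⟨a, -, rfl⟩
  exact mem0_FC h0 a

lemma hasMin_FC_omega (h0 : 0 < r) (hf : χ ⟨0, h0⟩ = .omega) :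
    HasMin (FC (Σₗ i, (χ i).carrier)) := by
  obtain ⟨b, hb⟩ := OT.exists_bot_of_omega hf
  refine ⟨_, mem0_FC h0 b, fun x _ => ?_⟩
  obtain ⟨i, a⟩ := x
  by_cases hi : i = ⟨0, h0⟩
  · subst hi; exact toLex_le_same (hb a)
  · exact toLex_le_left (Fin.lt_def.2 (Nat.pos_of_ne_zero fun h => hi (Fin.ext h))) _ _

lemma not_hasMin_FC_star (hχ : IsReducedSeq χ) (h0 : 0 < r) (hst : χ ⟨0, h0⟩ = .omegaStar) :
    ¬ HasMin (FC (Σₗ i, (χ i).carrier)) := by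
  rintro ⟨m, -, hmin⟩
  obtain ⟨i, a⟩ := m
  by_cases hi : i = ⟨0, h0⟩
  · subst hi
    obtain ⟨b, hb⟩ := OT.exists_lt_of_omegaStar hst a
    exact absurd (hmin _ (mem0_FC h0 b)) (not_le.2 (toLex_lt_same hb))
  · obtain ⟨b0⟩ := reduced_nonempty hχ ⟨0, h0⟩
    have h0i : (⟨0, h0⟩ : Fin r) < i :=
      Fin.lt_def.2 (Nat.pos_of_ne_zero fun h => hi (Fin.ext h))
    exact absurd (hmin _ (mem0_FC h0 b0)) (not_le.2 (toLex_lt_left h0i _ _))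

lemma hasMax_FC_star1 (h0 : 0 < r) (hst : χ ⟨0, h0⟩ = .omegaStar)
    (hdesc : FC (Σₗ i, (χ i).carrier) = {x | x.1.val < 1}) :
    HasMax (FC (Σₗ i, (χ i).carrier)) := by
  obtain ⟨t, ht⟩ := OT.exists_top_of_omegaStar hst
  refine ⟨_, mem0_FC h0 t, fun x hx => ?_⟩
  rw [hdesc] at hx
  obtain ⟨i, a⟩ := x
  have : i = ⟨0, h0⟩ := Fin.ext (Nat.lt_one_iff.1 hx)
  subst this
  exact toLex_le_same (ht a)

lemma not_hasMax_FC_star2 (hχ : IsReducedSeq χ) (h1 : 1 < r)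
    (hst : χ ⟨0, Nat.lt_of_succ_lt h1⟩ = .omegaStar) (hom : χ ⟨1, h1⟩ = .omega)
    (hdesc : FC (Σₗ i, (χ i).carrier) = {x | x.1.val < 2}) :
    ¬ HasMax (FC (Σₗ i, (χ i).carrier)) := by
  rintro ⟨m, hm, hmax⟩
  rw [hdesc] at hm
  obtain ⟨i, a⟩ := m
  obtain ⟨iv, hilt⟩ := i
  have hm' : iv < 2 := hm
  rcases (by omega : iv = 0 ∨ iv = 1) with h | h
  · subst h
    obtain ⟨b1⟩ := reduced_nonempty hχ ⟨1, h1⟩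
    have hcon : (1:ℕ) ≤ 0 := fst_le_of_le (hmax _ (memZ_FC h1 hst hom b1))
    omega
  · subst h
    obtain ⟨a', ha'⟩ := OT.exists_gt_of_omega hom a
    exact absurd (hmax _ (memZ_FC h1 hst hom a')) (not_le.2 (toLex_lt_same ha'))

lemma setOf_lt_one_eq_range (h0 : 0 < r) :
    {x : Σₗ i, (χ i).carrier | x.1.val < 1} =
      Set.range (fun a : (χ ⟨0, h0⟩).carrier => toLex (⟨⟨0, h0⟩, a⟩ : Σ i, (χ i).carrier)) := by
  ext x
  simp only [Set.mem_setOf_eq, Set.mem_range]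
  constructor
  · intro hx
    obtain ⟨i, a⟩ := x
    have : i = ⟨0, h0⟩ := Fin.ext (Nat.lt_one_iff.1 hx)
    subst this
    exact ⟨a, rfl⟩
  · rintro ⟨a, rfl⟩
    exact Nat.one_pos

lemma card_block0 (h0 : 0 < r) {n : ℕ} (hf : χ ⟨0, h0⟩ = .fin n) :
    Nat.card {x : Σₗ i, (χ i).carrier | x.1.val < 1} = n := by
  rw [setOf_lt_one_eq_range h0, Nat.card_range_of_injective (mk0_injective h0)]
  exact OT.card_of_fin hf

lemma finite_block0 (h0 : 0 < r) {n : ℕ} (hf : χ ⟨0, h0⟩ = .fin n) :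
    ({x : Σₗ i, (χ i).carrier | x.1.val < 1}).Finite := by
  rw [setOf_lt_one_eq_range h0]
  have : Finite (χ ⟨0, h0⟩).carrier := by
    rw [show (χ ⟨0, h0⟩).carrier = Fin n from by rw [hf]; rfl]
    infer_instance
  exact Set.finite_range _

lemma headCases (hχ : IsReducedSeq χ) (h0 : 0 < r) :
    (∃ n : ℕ, χ ⟨0, h0⟩ = .fin n ∧
      FC (Σₗ i, (χ i).carrier) = {x | x.1.val < 1} ∧
      (FC (Σₗ i, (χ i).carrier)).Finite ∧
      Nat.card (FC (Σₗ i, (χ i).carrier)) = n) ∨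
    (χ ⟨0, h0⟩ = .omega ∧
      FC (Σₗ i, (χ i).carrier) = {x | x.1.val < 1} ∧
      (FC (Σₗ i, (χ i).carrier)).Infinite ∧ HasMin (FC (Σₗ i, (χ i).carrier))) ∨
    (χ ⟨0, h0⟩ = .omegaStar ∧
      FC (Σₗ i, (χ i).carrier) = {x | x.1.val < 1} ∧
      (FC (Σₗ i, (χ i).carrier)).Infinite ∧ ¬ HasMin (FC (Σₗ i, (χ i).carrier)) ∧
      HasMax (FC (Σₗ i, (χ i).carrier))) ∨
    (χ ⟨0, h0⟩ = .omegaStar ∧ ∃ h1 : 1 < r, χ ⟨1, h1⟩ = .omega ∧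
      FC (Σₗ i, (χ i).carrier) = {x | x.1.val < 2} ∧
      (FC (Σₗ i, (χ i).carrier)).Infinite ∧ ¬ HasMin (FC (Σₗ i, (χ i).carrier)) ∧
      ¬ HasMax (FC (Σₗ i, (χ i).carrier))) := by
  rcases hv : χ ⟨0, h0⟩ with _ | _ | n
  · refine Or.inr (Or.inl ⟨rfl, FC_desc_omega h0 hv, ?_, hasMin_FC_omega h0 hv⟩)
    exact FC_infinite_of h0 (OT.infinite_univ_of_omega hv)
  · by_cases hr1 : 1 < r
    · rcases next_of_star hχ hr1 hv with hom | hstar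
      · refine Or.inr (Or.inr (Or.inr ⟨rfl, hr1, hom, FC_desc_star2 hr1 hv hom, ?_, ?_, ?_⟩))
        · exact FC_infinite_of h0 (OT.infinite_univ_of_omegaStar hv)
        · exact not_hasMin_FC_star hχ h0 hv
        · exact not_hasMax_FC_star2 hχ hr1 hv hom (FC_desc_star2 hr1 hv hom)
      · have hd := FC_desc_star1 hχ h0 hv (fun _ => hstar)
        refine Or.inr (Or.inr (Or.inl ⟨rfl, hd, ?_, not_hasMin_FC_star hχ h0 hv,
          hasMax_FC_star1 h0 hv hd⟩))
        exact FC_infinite_of h0 (OT.infinite_univ_of_omegaStar hv)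
    · have hd := FC_desc_star1 hχ h0 hv (fun h1 => absurd h1 hr1)
      refine Or.inr (Or.inr (Or.inl ⟨rfl, hd, ?_, not_hasMin_FC_star hχ h0 hv,
        hasMax_FC_star1 h0 hv hd⟩))
      exact FC_infinite_of h0 (OT.infinite_univ_of_omegaStar hv)
  · refine Or.inl ⟨n, rfl, FC_desc_fin hχ h0 hv, ?_, ?_⟩
    · rw [FC_desc_fin hχ h0 hv]
      exact finite_block0 h0 hv
    · rw [FC_desc_fin hχ h0 hv]
      exact card_block0 h0 hv

end Classify

section Peel

variable {r : ℕ}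

def tailSeq (χ : Fin r → OT) (k : ℕ) (hk : k ≤ r) : Fin (r - k) → OT :=
  fun i => χ ⟨k + i.val, by have := i.isLt; omega⟩

lemma tail_reduced (χ : Fin r → OT) (hχ : IsReducedSeq χ) (k : ℕ) (hk : k ≤ r) :
    IsReducedSeq (tailSeq χ k hk) := by
  constructor
  · exact fun i n h => hχ.1 _ n h
  · intro i h
    exact hχ.2 (k + i) (by omega)

def tailMap (χ : Fin r → OT) (k : ℕ) (hk : k ≤ r) :
    (Σₗ i, (tailSeq χ k hk i).carrier) → {x : Σₗ i, (χ i).carrier // k ≤ x.1.val} :=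
  fun p => ⟨toLex ⟨⟨k + p.1.val, by have := p.1.isLt; omega⟩, p.2⟩, Nat.le_add_right _ _⟩

lemma tailMap_strictMono (χ : Fin r → OT) (k : ℕ) (hk : k ≤ r) :
    StrictMono (tailMap χ k hk) := by
  intro p q hpq
  obtain ⟨i, a⟩ := p
  obtain ⟨j, b⟩ := q
  rcases hpq with ⟨_, _, h⟩ | ⟨_, _, h⟩
  · exact Subtype.mk_lt_mk.2
      (toLex_lt_left (Fin.lt_def.2 (by have := Fin.lt_def.1 h; simp only [Fin.val_mk]; omega)) _ _)
  · exact Subtype.mk_lt_mk.2 (toLex_lt_same h)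

lemma tailMap_surjective (χ : Fin r → OT) (k : ℕ) (hk : k ≤ r) :
    Function.Surjective (tailMap χ k hk) := by
  rintro ⟨x, hx⟩
  obtain ⟨i, a⟩ := x
  obtain ⟨iv, hilt⟩ := i
  have hx' : k ≤ iv := hx
  obtain ⟨j, rfl⟩ : ∃ j, iv = k + j := ⟨iv - k, by omega⟩
  exact ⟨toLex ⟨⟨j, by omega⟩, a⟩, rfl⟩

noncomputable def tailIso (χ : Fin r → OT) (k : ℕ) (hk : k ≤ r) :
    (Σₗ i, (tailSeq χ k hk i).carrier) ≃o {x : Σₗ i, (χ i).carrier // k ≤ x.1.val} :=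
  StrictMono.orderIsoOfSurjective _ (tailMap_strictMono χ k hk) (tailMap_surjective χ k hk)

def restrictIso {α β : Type*} [LinearOrder α] [LinearOrder β] (f : α ≃o β)
    (P : α → Prop) (Q : β → Prop) (h : ∀ x, P x ↔ Q (f x)) :
    {x // P x} ≃o {y // Q y} where
  toFun x := ⟨f x, (h x).1 x.2⟩
  invFun y := ⟨f.symm y, (h (f.symm y)).2 (by rw [f.apply_symm_apply]; exact y.2)⟩
  left_inv x := Subtype.ext (f.symm_apply_apply x)
  right_inv y := Subtype.ext (f.apply_symm_apply y)
  map_rel_iff' := by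
    intro x y
    exact f.le_iff_le

lemma tails_conclude {s : ℕ} (χ : Fin r → OT) (ψ : Fin s → OT)
    (f : (Σₗ i, (χ i).carrier) ≃o (Σₗ j, (ψ j).carrier))
    (k : ℕ) (hkr : k ≤ r) (hks : k ≤ s)
    (hdX : FC (Σₗ i, (χ i).carrier) = {x | x.1.val < k})
    (hdY : FC (Σₗ j, (ψ j).carrier) = {y | y.1.val < k}) :
    Nonempty ((Σₗ i, (tailSeq χ k hkr i).carrier) ≃o (Σₗ j, (tailSeq ψ k hks j).carrier)) := by
  have hPQ : ∀ x : Σₗ i, (χ i).carrier, k ≤ x.1.val ↔ k ≤ (f x).1.val := by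
    intro x
    have hiff := fc_map f x
    rw [hdX, hdY] at hiff
    simp only [Set.mem_setOf_eq] at hiff
    constructor
    · intro hk2
      by_contra hcon
      exact absurd (hiff.2 (by omega)) (by omega)
    · intro hk2
      by_contra hcon
      exact absurd (hiff.1 (by omega)) (by omega)
  exact ⟨((tailIso χ k hkr).trans (restrictIso f _ _ hPQ)).trans (tailIso ψ k hks).symm⟩

lemma conclude {s : ℕ} (χ : Fin r → OT) (ψ : Fin s → OT) (k : ℕ) (hkr : k ≤ r) (hks : k ≤ s)
    (hrs : r = s)
    (hhead : ∀ j (_ : j < k) (hjr : j < r) (hjs : j < s), χ ⟨j, hjr⟩ = ψ ⟨j, hjs⟩)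
    (he : r - k = s - k)
    (htl : ∀ i : Fin (r - k), tailSeq χ k hkr i = tailSeq ψ k hks (Fin.cast he i)) :
    ∀ i : Fin r, χ i = ψ (Fin.cast hrs i) := by
  intro i
  by_cases hik : i.val < k
  · have h2 : Fin.cast hrs i = (⟨i.val, by omega⟩ : Fin s) := Fin.ext (by simp)
    rw [h2]
    exact hhead i.val hik i.isLt (by omega)
  · have h1 : i = (⟨k + (i.val - k), by omega⟩ : Fin r) :=
      Fin.ext (show i.val = k + (i.val - k) by omega)
    have h2 : Fin.cast hrs i = (⟨k + (i.val - k), by omega⟩ : Fin s) :=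
      Fin.ext (by simp only [Fin.coe_cast, Fin.val_mk]; omega)
    conv_lhs => rw [h1]
    rw [h2]
    exact htl ⟨i.val - k, by omega⟩

lemma peel_step {s : ℕ} (χ : Fin r → OT) (ψ : Fin s → OT)
    (hχ : IsReducedSeq χ) (hψ : IsReducedSeq ψ)
    (f : (Σₗ i, (χ i).carrier) ≃o (Σₗ j, (ψ j).carrier))
    (k : ℕ) (hk0 : 0 < k) (hkr : k ≤ r) (hks : k ≤ s)
    (hdX : FC (Σₗ i, (χ i).carrier) = {x | x.1.val < k})
    (hdY : FC (Σₗ j, (ψ j).carrier) = {y | y.1.val < k})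
    (hhead : ∀ j (_ : j < k) (hjr : j < r) (hjs : j < s), χ ⟨j, hjr⟩ = ψ ⟨j, hjs⟩)
    (IH : ∀ m, m < r → ∀ (s' : ℕ) (χ' : Fin m → OT) (ψ' : Fin s' → OT),
        IsReducedSeq χ' → IsReducedSeq ψ' →
        Nonempty ((Σₗ i, (χ' i).carrier) ≃o (Σₗ j, (ψ' j).carrier)) →
        ∃ h : m = s', ∀ i : Fin m, χ' i = ψ' (Fin.cast h i)) :
    ∃ h : r = s, ∀ i : Fin r, χ i = ψ (Fin.cast h i) := by
  have hiso := tails_conclude χ ψ f k hkr hks hdX hdY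
  obtain ⟨he, htl⟩ := IH (r - k) (by omega) (s - k) _ _
    (tail_reduced χ hχ k hkr) (tail_reduced ψ hψ k hks) hiso
  have hrs : r = s := by omega
  exact ⟨hrs, conclude χ ψ k hkr hks hrs hhead he htl⟩

end Peel

theorem main_aux : ∀ r : ℕ, ∀ (s : ℕ) (χ : Fin r → OT) (ψ : Fin s → OT),
    IsReducedSeq χ → IsReducedSeq ψ →
    Nonempty ((Σₗ i, (χ i).carrier) ≃o (Σₗ j, (ψ j).carrier)) →
    ∃ h : r = s, ∀ i : Fin r, χ i = ψ (Fin.cast h i) := by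
  intro r
  induction r using Nat.strong_induction_on with
  | _ r IH =>
  rintro s χ ψ hχ hψ ⟨f⟩
  rcases Nat.eq_zero_or_pos r with hr0 | hr0
  · subst hr0
    have hs0 : s = 0 := by
      by_contra hs
      have h0s : 0 < s := Nat.pos_of_ne_zero hs
      obtain ⟨b0⟩ := reduced_nonempty hψ ⟨0, h0s⟩
      exact absurd (f.symm (toLex ⟨⟨0, h0s⟩, b0⟩)).1.isLt (by omega)
    subst hs0
    exact ⟨rfl, fun i => absurd i.isLt (by omega)⟩
  rcases Nat.eq_zero_or_pos s with hs0 | hs0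
  · subst hs0
    obtain ⟨b0⟩ := reduced_nonempty hχ ⟨0, hr0⟩
    exact absurd (f (toLex ⟨⟨0, hr0⟩, b0⟩)).1.isLt (by omega)
  have hFmap : ∀ x, x ∈ FC (Σₗ i, (χ i).carrier) ↔ f x ∈ FC (Σₗ j, (ψ j).carrier) :=
    fun x => fc_map f x
  have hFmap' : ∀ y, y ∈ FC (Σₗ j, (ψ j).carrier) ↔ f.symm y ∈ FC (Σₗ i, (χ i).carrier) :=
    fun y => fc_map f.symm y
  rcases headCases hχ hr0 with ⟨n, hf, hdX, hfinX, hcardX⟩ | ⟨hf, hdX, hinfX, hminX⟩ |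
      ⟨hf, hdX, hinfX, hminX, hmaxX⟩ | ⟨hf, h1X, homX, hdX, hinfX, hminX, hmaxX⟩ <;>
    rcases headCases hψ hs0 with ⟨m, hg, hdY, hfinY, hcardY⟩ | ⟨hg, hdY, hinfY, hminY⟩ |
      ⟨hg, hdY, hinfY, hminY, hmaxY⟩ | ⟨hg, h1Y, homY, hdY, hinfY, hminY, hmaxY⟩
  -- fin / fin
  · refine peel_step χ ψ hχ hψ f 1 Nat.one_pos hr0 hs0 hdX hdY ?_ IH
    intro j hj hjr hjs
    have hj0 : j = 0 := by omega
    subst hj0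
    have hnm : n = m := by
      rw [← hcardX, ← hcardY]
      exact transfer_card f hFmap
    exact hf.trans (by rw [hnm]; exact hg.symm)
  -- fin / omega
  · exact absurd (transfer_finite f hFmap hfinX) hinfY
  -- fin / star1
  · exact absurd (transfer_finite f hFmap hfinX) hinfY
  -- fin / star2
  · exact absurd (transfer_finite f hFmap hfinX) hinfY
  -- omega / fin
  · exact absurd (transfer_finite f.symm hFmap' hfinY) hinfX
  -- omega / omega
  · refine peel_step χ ψ hχ hψ f 1 Nat.one_pos hr0 hs0 hdX hdY ?_ IH
    intro j hj hjr hjs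
    have hj0 : j = 0 := by omega
    subst hj0
    exact hf.trans hg.symm
  -- omega / star1
  · exact absurd (transfer_hasMin f hFmap hminX) hminY
  -- omega / star2
  · exact absurd (transfer_hasMin f hFmap hminX) hminY
  -- star1 / fin
  · exact absurd (transfer_finite f.symm hFmap' hfinY) hinfX
  -- star1 / omega
  · exact absurd (transfer_hasMin f.symm hFmap' hminY) hminX
  -- star1 / star1
  · refine peel_step χ ψ hχ hψ f 1 Nat.one_pos hr0 hs0 hdX hdY ?_ IH
    intro j hj hjr hjs
    have hj0 : j = 0 := by omega
    subst hj0
    exact hf.trans hg.symm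
  -- star1 / star2
  · exact absurd (transfer_hasMax f hFmap hmaxX) hmaxY
  -- star2 / fin
  · exact absurd (transfer_finite f.symm hFmap' hfinY) hinfX
  -- star2 / omega
  · exact absurd (transfer_hasMin f.symm hFmap' hminY) hminX
  -- star2 / star1
  · exact absurd (transfer_hasMax f.symm hFmap' hmaxY) hmaxX
  -- star2 / star2
  · refine peel_step χ ψ hχ hψ f 2 Nat.zero_lt_two h1X h1Y hdX hdY ?_ IH
    intro j hj hjr hjs
    rcases (by omega : j = 0 ∨ j = 1) with hj0 | hj1
    · subst hj0
      exact hf.trans hg.symm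
    · subst hj1
      exact homX.trans homY.symm

theorem reduced_sum_unique {r s : ℕ} (χ : Fin r → OT) (ψ : Fin s → OT)
    (hχ : IsReducedSeq χ) (hψ : IsReducedSeq ψ)
    (hiso : Nonempty ((Σₗ i, (χ i).carrier) ≃o (Σₗ j, (ψ j).carrier))) :
    ∃ h : r = s, ∀ i : Fin r, χ i = ψ (Fin.cast h i) := by
  exact main_aux r s χ ψ hχ hψ hiso
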